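/- arXiv:2209.11033 — 2 statements merged into one kernel-verified Lean document; each statement's English description precedes it below -/
import Mathlib

section
/- Let (X, 𝒳, μ, T₁, …, T_ℓ) be a system, let a, b ∈ ℤ^ℓ, and let f ∈ L^∞(μ). If f is invariant under T^a T^{−b} (i.e., f∘(T^a T^{−b}) = f μ-a.e.), then ⟦f⟧_{s,T^a} = ⟦f⟧_{s,T^b} for every s ∈ ℕ. -/
open MeasureTheory Filter Polynomial
open scoped BigOperators ENNReal symmDiff Topology

noncomputable section

namespace FrantzikinakisKuca

variable {X : Type*} [MeasurableSpace X]

/-- `citer k z` applies complex conjugation `k` times to `z`. -/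
def citer (k : ℕ) (z : ℂ) : ℂ := if k % 2 = 0 then z else (starRingEnd ℂ) z

/-- The number of ones in `ε ∈ {0,1}^s`. -/
def epsWeight {s : ℕ} (ε : Fin s → Bool) : ℕ :=
  (Finset.univ.filter fun i => ε i = true).card

/-- `ε · h = ε₁h₁ + ⋯ + ε_s h_s`. -/
def epsDot {s : ℕ} (ε : Fin s → Bool) (h : Fin s → ℕ) : ℤ :=
  ∑ i, if ε i then (h i : ℤ) else 0

/-- The average over `h ∈ [H]^s` of `∫ ∏_{ε ∈ {0,1}^s} 𝒞^{|ε|} T^{ε·h} f dμ`. -/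
def ghkAvg (μ : Measure X) (T : Equiv.Perm X) (s : ℕ) (f : X → ℂ) (H : ℕ) : ℝ :=
  ((H : ℝ) ^ s)⁻¹ *
    ∑ h ∈ Fintype.piFinset fun _ : Fin s => Finset.Icc 1 H,
      (∫ x, ∏ ε : Fin s → Bool, citer (epsWeight ε) (f ((T ^ epsDot ε h) x)) ∂μ).re

/-- The `2^s`-th power of the Gowers–Host–Kra seminorm `⟦f⟧_{s,T}^{2^s}`,
given by the limit of `ghkAvg` (which exists). -/
def ghkPow (μ : Measure X) (T : Equiv.Perm X) (s : ℕ) (f : X → ℂ) : ℝ :=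
  limUnder atTop (ghkAvg μ T s f)

/-- The Gowers–Host–Kra seminorm `⟦f⟧_{s,T}`. -/
def ghkSeminorm (μ : Measure X) (T : Equiv.Perm X) (s : ℕ) (f : X → ℂ) : ℝ :=
  ghkPow μ T s f ^ ((1 : ℝ) / 2 ^ s)

/-- The σ-algebra `ℐ(T)` of `T`-invariant measurable sets. -/
def invSigma (T : X → X) : MeasurableSpace X where
  MeasurableSet' A := MeasurableSet A ∧ T ⁻¹' A = A
  measurableSet_empty := ⟨MeasurableSet.empty, by simp⟩
  measurableSet_compl := fun A hA => ⟨hA.1.compl, by rw [Set.preimage_compl, hA.2]⟩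
  measurableSet_iUnion := fun g hg =>
    ⟨MeasurableSet.iUnion fun i => (hg i).1, by
      rw [Set.preimage_iUnion]; exact Set.iUnion_congr fun i => (hg i).2⟩

/-- `A` is `μ`-a.e. invariant under `S` (membership in `ℐ(S)` up to `μ`-null sets). -/
def aeInv (μ : Measure X) (S : X → X) (A : Set X) : Prop := S ⁻¹' A =ᵐ[μ] A

/-- `T^b = T₁^{b₁} ⋯ T_ℓ^{b_ℓ}` for a vector `b ∈ ℤ^ℓ`. -/
def Tvec {ℓ : ℕ} (T : Fin ℓ → Equiv.Perm X) (b : Fin ℓ → ℤ) : Equiv.Perm X :=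
  (List.ofFn fun j => T j ^ b j).prod

/-- The `2^s`-th power of the box seminorm `⟦f⟧_{b₁,…,b_s}^{2^s}`, defined inductively:
`⟦f⟧_∅ = ∫ f dμ` and
`⟦f⟧_{b₁,…,b_{s+1}}^{2^{s+1}} = lim_H (1/H) ∑_{h=1}^H ⟦f · T^{b_{s+1}h} f̄⟧_{b₁,…,b_s}^{2^s}`. -/
def boxPow (μ : Measure X) {ℓ : ℕ} (T : Fin ℓ → Equiv.Perm X) :
    (s : ℕ) → (Fin s → Fin ℓ → ℤ) → (X → ℂ) → ℝ
  | 0, _, f => (∫ x, f x ∂μ).re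
  | s + 1, b, f =>
      limUnder atTop fun H : ℕ =>
        (H : ℝ)⁻¹ * ∑ h ∈ Finset.Icc 1 H,
          boxPow μ T s (fun i => b i.castSucc)
            fun x => f x * (starRingEnd ℂ) (f (Tvec T ((h : ℤ) • b (Fin.last s)) x))

/-- The box seminorm `⟦f⟧_{b₁,…,b_s}`. -/
def boxSeminorm (μ : Measure X) {ℓ : ℕ} (T : Fin ℓ → Equiv.Perm X) (s : ℕ)
    (b : Fin s → Fin ℓ → ℤ) (f : X → ℂ) : ℝ :=
  boxPow μ T s b f ^ ((1 : ℝ) / 2 ^ s)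

/-- The multiplicative derivative `Δ_{b₁,…,b_s;h} f = ∏_{ε} 𝒞^{|ε|} T^{b₁ε₁h₁+⋯+b_sε_sh_s} f`. -/
def deltaProd {ℓ : ℕ} (T : Fin ℓ → Equiv.Perm X) {s : ℕ} (b : Fin s → Fin ℓ → ℤ)
    (h : Fin s → ℤ) (f : X → ℂ) : X → ℂ :=
  fun x => ∏ ε : Fin s → Bool,
    citer (epsWeight ε) (f (Tvec T (∑ i, if ε i then h i • b i else 0) x))

/-- The polynomial multiple ergodic average `(1/N) ∑_{n=1}^N T₁^{p₁(n)}f₁ ⋯ T_ℓ^{p_ℓ(n)}f_ℓ`. -/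
def polyAvg {ℓ : ℕ} (T : Fin ℓ → Equiv.Perm X) (p : Fin ℓ → Polynomial ℤ)
    (f : Fin ℓ → X → ℂ) (N : ℕ) : X → ℂ :=
  fun x => (N : ℂ)⁻¹ * ∑ n ∈ Finset.Icc 1 N, ∏ j, f j ((T j ^ (p j).eval (n : ℤ)) x)

/-- The good ergodicity property: if `p_i/c_i = p_j/c_j` (i.e. `c_j p_i = c_i p_j`) with
`gcd(c_i,c_j)=1`, then `ℐ(T_i^{c_i}T_j^{-c_j}) = ℐ(T_i) ∩ ℐ(T_j)` up to `μ`-null sets. -/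
def GoodErgodicity (μ : Measure X) {ℓ : ℕ} (T : Fin ℓ → Equiv.Perm X)
    (p : Fin ℓ → Polynomial ℤ) : Prop :=
  ∀ i j : Fin ℓ, i ≠ j → ∀ ci cj : ℤ, ci ≠ 0 → cj ≠ 0 → Int.gcd ci cj = 1 →
    cj • p i = ci • p j →
    ∀ A : Set X, MeasurableSet A →
      (aeInv μ (⇑(T i ^ ci * (T j ^ cj)⁻¹)) A ↔ aeInv μ (⇑(T i)) A ∧ aeInv μ (⇑(T j)) A)

/-- `S` is ergodic: every invariant set has measure `0` or `1`. -/
def IsErgodicMap (μ : Measure X) (S : X → X) : Prop :=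
  ∀ A : Set X, MeasurableSet A → S ⁻¹' A = A → μ A = 0 ∨ μ A = 1

/-- The very good ergodicity property. -/
def VeryGoodErgodicity (μ : Measure X) {ℓ : ℕ} (T : Fin ℓ → Equiv.Perm X)
    (p : Fin ℓ → Polynomial ℤ) : Prop :=
  ∀ i j : Fin ℓ, i ≠ j → ∀ ci cj : ℤ, ci ≠ 0 → cj ≠ 0 → Int.gcd ci cj = 1 →
    cj • p i = ci • p j → IsErgodicMap μ (⇑(T i ^ ci * (T j ^ cj)⁻¹))

/-- Nonergodic eigenfunction of `S`. -/
def IsNonergodicEigenfunction (μ : Measure X) (S : X → X) (χ : X → ℂ) : Prop :=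
  Measurable χ ∧
    ∃ lam : X → ℂ, Measurable lam ∧ lam ∘ S =ᵐ[μ] lam ∧
      (∀ᵐ x ∂μ, ‖χ x‖ = 0 ∨ ‖χ x‖ = 1) ∧
      (∀ᵐ x ∂μ, χ x = 0 → lam x = 0) ∧
      χ ∘ S =ᵐ[μ] fun x => lam x * χ x

/-- `lam = e(α)` belongs to `Spec(S)`: it is a unimodular eigenvalue of some
not-a.e.-zero nonergodic eigenfunction. -/
def SpecMem (μ : Measure X) (S : X → X) (lam : ℂ) : Prop :=
  ‖lam‖ = 1 ∧ ∃ χ : X → ℂ, IsNonergodicEigenfunction μ S χ ∧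
    ¬χ =ᵐ[μ] (fun _ => (0 : ℂ)) ∧ χ ∘ S =ᵐ[μ] fun x => lam * χ x

/-- A sequence of transformations is ergodic for `μ`. -/
def ErgodicSeqFor (μ : Measure X) (S : ℕ → X → X) : Prop :=
  ∀ f : X → ℂ, Measurable f → (∃ C, ∀ x, ‖f x‖ ≤ C) →
    Tendsto (fun N : ℕ => eLpNorm
      (fun x => (N : ℂ)⁻¹ * ∑ n ∈ Finset.Icc 1 N, f (S n x) - ∫ y, f y ∂μ) 2 μ)
      atTop (𝓝 0)

/-- Sequences `a₁,…,a_ℓ` are weakly jointly ergodic for the system. -/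
def WeaklyJointlyErgodicSeq (μ : Measure X) {ℓ : ℕ} (T : Fin ℓ → Equiv.Perm X)
    (a : Fin ℓ → ℕ → ℤ) : Prop :=
  ∀ f : Fin ℓ → X → ℂ, (∀ j, Measurable (f j)) → (∀ j, ∃ C, ∀ x, ‖f j x‖ ≤ C) →
    Tendsto (fun N : ℕ => eLpNorm
      (fun x => (N : ℂ)⁻¹ * ∑ n ∈ Finset.Icc 1 N, ∏ j, f j ((T j ^ a j n) x)
        - ∏ j, condExp (invSigma ⇑(T j)) μ (f j) x) 2 μ)
      atTop (𝓝 0)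

/-- Sequences `a₁,…,a_ℓ` are jointly ergodic for the system. -/
def JointlyErgodicSeq (μ : Measure X) {ℓ : ℕ} (T : Fin ℓ → Equiv.Perm X)
    (a : Fin ℓ → ℕ → ℤ) : Prop :=
  ∀ f : Fin ℓ → X → ℂ, (∀ j, Measurable (f j)) → (∀ j, ∃ C, ∀ x, ‖f j x‖ ≤ C) →
    Tendsto (fun N : ℕ => eLpNorm
      (fun x => (N : ℂ)⁻¹ * ∑ n ∈ Finset.Icc 1 N, ∏ j, f j ((T j ^ a j n) x)
        - ∏ j, ∫ y, f j y ∂μ) 2 μ)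
      atTop (𝓝 0)

/-- Multivariable polynomial ergodic average over a finite set `I ⊆ ℤ^K`. -/
def mvAvg {K ℓ : ℕ} (T : Fin ℓ → Equiv.Perm X) (p : Fin ℓ → MvPolynomial (Fin K) ℤ)
    (f : Fin ℓ → X → ℂ) (I : Finset (Fin K → ℤ)) : X → ℂ :=
  fun x => (I.card : ℂ)⁻¹ * ∑ n ∈ I, ∏ j, f j ((T j ^ MvPolynomial.eval n (p j)) x)

/-- A Følner sequence in `ℤ^K`. -/
def IsFolner {K : ℕ} (I : ℕ → Finset (Fin K → ℤ)) : Prop :=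
  ∀ h : Fin K → ℤ, Tendsto
    (fun N => ((((I N).image fun n => n + h) ∆ I N).card : ℝ) / ((I N).card : ℝ))
    atTop (𝓝 0)

/-- Good ergodicity property for multivariable polynomials. -/
def GoodErgodicityMv (μ : Measure X) {K ℓ : ℕ} (T : Fin ℓ → Equiv.Perm X)
    (p : Fin ℓ → MvPolynomial (Fin K) ℤ) : Prop :=
  ∀ i j : Fin ℓ, i ≠ j → ∀ ci cj : ℤ, ci ≠ 0 → cj ≠ 0 → Int.gcd ci cj = 1 →
    cj • p i = ci • p j →
    ∀ A : Set X, MeasurableSet A →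
      (aeInv μ (⇑(T i ^ ci * (T j ^ cj)⁻¹)) A ↔ aeInv μ (⇑(T i)) A ∧ aeInv μ (⇑(T j)) A)

/-- The standard basis vector `e_k ∈ ℤ^ℓ`. -/
def stdVec {ℓ : ℕ} (k : Fin ℓ) : Fin ℓ → ℤ := fun j => if j = k then 1 else 0

/-- The ordering on types: `w' < w` iff for some `κ`, `w'_t = w_t` for `t < κ` and either
`w'_κ = 0 < w_κ` or `w'_κ > w_κ > 0` (0-indexed rendering of the paper's definition). -/
def typeLT {K : ℕ} (w' w : Fin K → ℕ) : Prop :=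
  ∃ κ : Fin K, (∀ t : Fin K, t < κ → w' t = w t) ∧
    ((w' κ = 0 ∧ 0 < w κ) ∨ (w κ < w' κ ∧ 0 < w κ))



private lemma mp_perm_mul {μ : Measure X} {e g : Equiv.Perm X}
    (he : MeasurePreserving ⇑e μ μ) (hg : MeasurePreserving ⇑g μ μ) :
    MeasurePreserving ⇑(e * g) μ μ := by
  simpa [Equiv.Perm.coe_mul] using he.comp hg

private lemma mp_perm_pow {μ : Measure X} {e : Equiv.Perm X}
    (he : MeasurePreserving ⇑e μ μ) (n : ℕ) : MeasurePreserving ⇑(e ^ n) μ μ := by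
  induction n with
  | zero => simpa [pow_zero, Equiv.Perm.coe_one] using MeasurePreserving.id μ
  | succ n ih => rw [pow_succ]; exact mp_perm_mul ih he

private lemma mp_perm_zpow {μ : Measure X} {e : Equiv.Perm X}
    (he : MeasurePreserving ⇑e μ μ) (he' : MeasurePreserving ⇑e⁻¹ μ μ) (n : ℤ) :
    MeasurePreserving ⇑(e ^ n) μ μ := by
  cases n with
  | ofNat m => simpa using mp_perm_pow he m
  | negSucc m =>
      rw [zpow_negSucc, ← inv_pow]
      exact mp_perm_pow he' (m + 1)

private lemma mp_perm_list {μ : Measure X} (L : List (Equiv.Perm X))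
    (h : ∀ e ∈ L, MeasurePreserving ⇑e μ μ) : MeasurePreserving ⇑L.prod μ μ := by
  induction L with
  | nil => simpa [Equiv.Perm.coe_one] using MeasurePreserving.id μ
  | cons e L ih =>
      rw [List.prod_cons]
      exact mp_perm_mul (h e (List.mem_cons_self))
        (ih fun g hg => h g (List.mem_cons_of_mem e hg))

private lemma ae_inv_comp_pow {μ : Measure X} {e : Equiv.Perm X} {f : X → ℂ}
    (he : MeasurePreserving ⇑e μ μ) (hinv : f ∘ ⇑e =ᵐ[μ] f) (n : ℕ) :
    f ∘ ⇑(e ^ n) =ᵐ[μ] f := by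
  induction n with
  | zero => simp [pow_zero, Equiv.Perm.coe_one]
  | succ n ih =>
      have h1 : (f ∘ ⇑(e ^ n)) ∘ ⇑e =ᵐ[μ] f ∘ ⇑e :=
        he.quasiMeasurePreserving.ae_eq_comp ih
      have h2 : f ∘ ⇑(e ^ (n + 1)) = (f ∘ ⇑(e ^ n)) ∘ ⇑e := by
        rw [pow_succ]; rfl
      rw [h2]
      exact h1.trans hinv

private lemma ae_inv_comp_zpow {μ : Measure X} {e : Equiv.Perm X} {f : X → ℂ}
    (he : MeasurePreserving ⇑e μ μ) (he' : MeasurePreserving ⇑e⁻¹ μ μ)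
    (hinv : f ∘ ⇑e =ᵐ[μ] f) (n : ℤ) : f ∘ ⇑(e ^ n) =ᵐ[μ] f := by
  have hinv' : f ∘ ⇑e⁻¹ =ᵐ[μ] f := by
    have h1 : (f ∘ ⇑e) ∘ ⇑e⁻¹ =ᵐ[μ] f ∘ ⇑e⁻¹ :=
      he'.quasiMeasurePreserving.ae_eq_comp hinv
    have h2 : (f ∘ ⇑e) ∘ ⇑e⁻¹ = f := by
      funext x; simp [Function.comp, Equiv.Perm.inv_def]
    rw [h2] at h1
    exact h1.symm
  cases n with
  | ofNat m => simpa using ae_inv_comp_pow he hinv m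
  | negSucc m =>
      rw [zpow_negSucc, ← inv_pow]
      exact ae_inv_comp_pow he' hinv' (m + 1)

private lemma mp_perm_list_inv {μ : Measure X} (L : List (Equiv.Perm X))
    (h : ∀ e ∈ L, MeasurePreserving ⇑e⁻¹ μ μ) : MeasurePreserving ⇑L.prod⁻¹ μ μ := by
  rw [List.prod_inv_reverse]
  refine mp_perm_list _ ?_
  intro e he
  rw [List.mem_reverse, List.mem_map] at he
  obtain ⟨g, hg, rfl⟩ := he
  exact h g hg

/-- **Lemma 2.3(i).** If `f` is invariant under `T^a T^{-b}` (μ-a.e.), then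
`⟦f⟧_{s,T^a} = ⟦f⟧_{s,T^b}` for every `s ∈ ℕ`. -/
theorem ghk_seminorm_of_invariant {X : Type*} [MeasurableSpace X] (μ : Measure X)
    [IsProbabilityMeasure μ] {ℓ : ℕ} (T : Fin ℓ → Equiv.Perm X)
    (hmp : ∀ j, MeasurePreserving (⇑(T j)) μ μ)
    (hmpinv : ∀ j, MeasurePreserving (⇑(T j)⁻¹) μ μ)
    (hcomm : ∀ i j, Commute (T i) (T j))
    (a b : Fin ℓ → ℤ) (f : X → ℂ) (hf : Measurable f) (hfb : ∃ C, ∀ x, ‖f x‖ ≤ C)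
    (hinv : f ∘ ⇑(Tvec T a * (Tvec T b)⁻¹) =ᵐ[μ] f) :
    ∀ s : ℕ, ghkSeminorm μ (Tvec T a) s f = ghkSeminorm μ (Tvec T b) s f := by
  have hmpvec : ∀ c : Fin ℓ → ℤ, MeasurePreserving ⇑(Tvec T c) μ μ := by
    intro c
    refine mp_perm_list _ ?_
    intro e he
    rw [List.mem_ofFn] at he
    obtain ⟨j, rfl⟩ := he
    exact mp_perm_zpow (hmp j) (hmpinv j) (c j)
  have hmpvecinv : ∀ c : Fin ℓ → ℤ, MeasurePreserving ⇑(Tvec T c)⁻¹ μ μ := by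
    intro c
    refine mp_perm_list_inv _ ?_
    intro e he
    rw [List.mem_ofFn] at he
    obtain ⟨j, rfl⟩ := he
    rw [← zpow_neg]
    exact mp_perm_zpow (hmp j) (hmpinv j) (-c j)
  set S : Equiv.Perm X := Tvec T a * (Tvec T b)⁻¹ with hS_def
  have hSmp : MeasurePreserving ⇑S μ μ := mp_perm_mul (hmpvec a) (hmpvecinv b)
  have hSinvmp : MeasurePreserving ⇑S⁻¹ μ μ := by
    have : S⁻¹ = Tvec T b * (Tvec T a)⁻¹ := by rw [hS_def]; group
    rw [this]
    exact mp_perm_mul (hmpvec b) (hmpvecinv a)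
  have hcab : Commute (Tvec T a) (Tvec T b) := by
    refine Commute.list_prod_right _ _ ?_
    intro y hy
    rw [List.mem_ofFn] at hy
    obtain ⟨j, rfl⟩ := hy
    refine Commute.list_prod_left _ _ ?_
    intro z hz
    rw [List.mem_ofFn] at hz
    obtain ⟨i, rfl⟩ := hz
    exact (hcomm i j).zpow_zpow _ _
  have hSb : Commute S (Tvec T b) := by
    rw [hS_def]
    exact Commute.mul_left hcab ((Commute.refl (Tvec T b)).inv_left)
  have hab : Tvec T a = S * Tvec T b := by rw [hS_def]; group
  have key : ∀ n : ℤ, f ∘ ⇑(Tvec T a ^ n) =ᵐ[μ] f ∘ ⇑(Tvec T b ^ n) := by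
    intro n
    have h1 : Tvec T a ^ n = S ^ n * Tvec T b ^ n := by rw [hab, hSb.mul_zpow]
    have h2 : f ∘ ⇑(Tvec T a ^ n) = (f ∘ ⇑(S ^ n)) ∘ ⇑(Tvec T b ^ n) := by
      rw [h1]; rfl
    rw [h2]
    exact ((mp_perm_zpow (hmpvec b) (hmpvecinv b) n).quasiMeasurePreserving.ae_eq_comp
      (ae_inv_comp_zpow hSmp hSinvmp hinv n))
  intro s
  have havg : ghkAvg μ (Tvec T a) s f = ghkAvg μ (Tvec T b) s f := by
    funext H
    unfold ghkAvg
    congr 1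
    refine Finset.sum_congr rfl ?_
    intro h _
    congr 1
    apply integral_congr_ae
    have hall : ∀ᵐ x ∂μ, ∀ ε : Fin s → Bool,
        f ((Tvec T a ^ epsDot ε h) x) = f ((Tvec T b ^ epsDot ε h) x) :=
      ae_all_iff.2 fun ε => key (epsDot ε h)
    filter_upwards [hall] with x hx
    exact Finset.prod_congr rfl fun ε _ => by rw [hx ε]
  unfold ghkSeminorm ghkPow
  rw [havg]


end FrantzikinakisKuca
end
end

section
/- Let ℓ, s ∈ ℕ, let η ∈ {1,…,ℓ}^ℓ, let m, i ∈ {1,…,ℓ} be distinct, and let η' := τ_{mi}η be the tuple with η'_j = η_j for j ≠ m and η'_m = η_i. Let p₁,…,p_ℓ ∈ ℤ[n] be polynomials with leading coefficients a₁,…,a_ℓ, let (X, 𝒳, μ, T₁, …, T_ℓ) be a system, and let b₁,…,b_s ∈ ℤ^ℓ. Suppose that for some γ ∈ ℕ, each f_j ∈ L^∞(μ), j ∈ {1,…,ℓ}, is invariant under (T_{η_j}^{a_{η_j}} T_j^{−a_j})^γ. For h ∈ ℤ^s define f'_{j,h} := Δ_{b₁,…,b_s;h} f_j for j ≠ m,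 and let f'_{m,h} ∈ L^∞(μ) be invariant under both (T_{η_m}^{a_{η_m}} T_m^{−a_m})^{γ₁} and (T_{η_i}^{a_{η_i}} T_{η_m}^{−a_{η_m}})^{γ₂} for some γ₁, γ₂ ∈ ℕ independent of h. Then there exists γ' ∈ ℕ (one may take γ' = lcm(γ, γ₁γ₂)) such that for every h ∈ ℤ^s and every j ∈ {1,…,ℓ}, the function f'_{j,h} is invariant under (T_{η'_j}^{a_{η'_j}} T_j^{−a_j})^{γ'}. -/
open MeasureTheory Filter Polynomial
open scoped BigOperators ENNReal symmDiff Topology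

noncomputable section

namespace FrantzikinakisKuca

variable {X : Type*} [MeasurableSpace X]

/-- The subgroup of permutations that, together with their inverses, preserve `μ`. -/
def mpSubgroup (μ : Measure X) : Subgroup (Equiv.Perm X) where
  carrier := {g | MeasurePreserving ⇑g μ μ ∧ MeasurePreserving ⇑g⁻¹ μ μ}
  one_mem' := by
    constructor <;> · simpa using MeasurePreserving.id μ
  mul_mem' := fun {a b} ha hb =>
    ⟨by rw [Equiv.Perm.coe_mul]; exact ha.1.comp hb.1,
     by rw [mul_inv_rev, Equiv.Perm.coe_mul]; exact hb.2.comp ha.2⟩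
  inv_mem' := fun {a} ha => ⟨ha.2, by simpa using ha.1⟩

private lemma aeComp {μ : Measure X} {U : X → X} (hU : MeasurePreserving U μ μ)
    {g₁ g₂ : X → ℂ} (h : g₁ =ᵐ[μ] g₂) : g₁ ∘ U =ᵐ[μ] g₂ ∘ U :=
  h.comp_tendsto hU.quasiMeasurePreserving.tendsto_ae

private lemma aeInvMul {μ : Measure X} {S U : Equiv.Perm X}
    (hU : MeasurePreserving ⇑U μ μ) {g : X → ℂ}
    (hS : g ∘ ⇑S =ᵐ[μ] g) (hUg : g ∘ ⇑U =ᵐ[μ] g) : g ∘ ⇑(S * U) =ᵐ[μ] g := by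
  have heq : g ∘ ⇑(S * U) = (g ∘ ⇑S) ∘ ⇑U := by
    ext x; simp [Equiv.Perm.coe_mul, Function.comp]
  rw [heq]
  exact (aeComp hU hS).trans hUg

private lemma aeInvPow {μ : Measure X} {S : Equiv.Perm X}
    (hS : MeasurePreserving ⇑S μ μ) {g : X → ℂ}
    (h : g ∘ ⇑S =ᵐ[μ] g) : ∀ n : ℕ, g ∘ ⇑(S ^ n) =ᵐ[μ] g
  | 0 => by simp
  | n + 1 => by
      rw [pow_succ]
      exact aeInvMul hS (aeInvPow hS h n) h

/-- **Proposition 6.9 (Propagation of invariance properties).** Suppose each `f_j` is invariant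
under `(T_{η_j}^{a_{η_j}} T_j^{-a_j})^γ` (a.e.), where `a_j` is the leading coefficient of `p_j`,
and the functions `f'_{m,h}` are invariant under `(T_{η_m}^{a_{η_m}} T_m^{-a_m})^{γ₁}` and
`(T_{η_i}^{a_{η_i}} T_{η_m}^{-a_{η_m}})^{γ₂}`. Then, with `η' = τ_{mi}η`, there exists `γ' ∈ ℕ`
(one may take `γ' = lcm(γ, γ₁γ₂)`) such that every `f'_{j,h}` (equal to `Δ_{b₁,…,b_s;h} f_j` for
`j ≠ m` and to `f'_{m,h}` for `j = m`) is invariant under `(T_{η'_j}^{a_{η'_j}} T_j^{-a_j})^{γ'}`. -/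
theorem propagation_of_invariance {X : Type*} [MeasurableSpace X] (μ : Measure X)
    [IsProbabilityMeasure μ] {ℓ s : ℕ} (T : Fin ℓ → Equiv.Perm X)
    (hmp : ∀ j, MeasurePreserving (⇑(T j)) μ μ)
    (hmpinv : ∀ j, MeasurePreserving (⇑(T j)⁻¹) μ μ)
    (hcomm : ∀ i j, Commute (T i) (T j))
    (η : Fin ℓ → Fin ℓ) (m i : Fin ℓ) (hmi : m ≠ i)
    (p : Fin ℓ → Polynomial ℤ) (hp0 : ∀ j, (p j).coeff 0 = 0)
    (b : Fin s → Fin ℓ → ℤ)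
    (γ γ₁ γ₂ : ℕ) (hγ : 0 < γ) (hγ₁ : 0 < γ₁) (hγ₂ : 0 < γ₂)
    (f : Fin ℓ → X → ℂ)
    (hinv : ∀ j, (f j) ∘
        ⇑((T (η j) ^ (p (η j)).leadingCoeff * (T j ^ (p j).leadingCoeff)⁻¹) ^ γ)
      =ᵐ[μ] f j)
    (fm' : (Fin s → ℤ) → X → ℂ)
    (hfm'1 : ∀ h : Fin s → ℤ, (fm' h) ∘
        ⇑((T (η m) ^ (p (η m)).leadingCoeff * (T m ^ (p m).leadingCoeff)⁻¹) ^ γ₁)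
      =ᵐ[μ] fm' h)
    (hfm'2 : ∀ h : Fin s → ℤ, (fm' h) ∘
        ⇑((T (η i) ^ (p (η i)).leadingCoeff * (T (η m) ^ (p (η m)).leadingCoeff)⁻¹) ^ γ₂)
      =ᵐ[μ] fm' h) :
    ∃ γ' : ℕ, 0 < γ' ∧
      ∀ (h : Fin s → ℤ) (j : Fin ℓ),
        (if j = m then fm' h else deltaProd T b h (f j)) ∘
          ⇑((T (Function.update η m (η i) j) ^
              (p (Function.update η m (η i) j)).leadingCoeff *
                (T j ^ (p j).leadingCoeff)⁻¹) ^ γ')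
        =ᵐ[μ] (if j = m then fm' h else deltaProd T b h (f j)) := by
  classical
  have hTmem : ∀ j, T j ∈ mpSubgroup μ := fun j => ⟨hmp j, hmpinv j⟩
  have hmemA : ∀ k j : Fin ℓ,
      (T k ^ (p k).leadingCoeff * (T j ^ (p j).leadingCoeff)⁻¹) ∈ mpSubgroup μ :=
    fun k j => mul_mem (zpow_mem (hTmem k) _) (inv_mem (zpow_mem (hTmem j) _))
  have hTvecMem : ∀ c : Fin ℓ → ℤ, Tvec T c ∈ mpSubgroup μ := fun c => by
    refine Subgroup.list_prod_mem _ ?_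
    intro x hx
    rw [List.mem_ofFn] at hx
    obtain ⟨j', rfl⟩ := hx
    exact zpow_mem (hTmem j') _
  have base : ∀ (k k' : Fin ℓ) (c c' : ℤ), Commute (T k ^ c) (T k' ^ c') :=
    fun k k' c c' => (hcomm k k').zpow_zpow c c'
  have hcT : ∀ (k : Fin ℓ) (c : Fin ℓ → ℤ) (e : ℤ), Commute (T k ^ e) (Tvec T c) := by
    intro k c e
    refine Commute.list_prod_right _ _ ?_
    intro x hx
    rw [List.mem_ofFn] at hx
    obtain ⟨j', rfl⟩ := hx
    exact base k j' e (c j')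
  refine ⟨γ * (γ₁ * γ₂), Nat.mul_pos hγ (Nat.mul_pos hγ₁ hγ₂), ?_⟩
  intro h j
  by_cases hj : j = m
  · subst hj
    simp only [if_pos rfl, Function.update_self]
    set U := T (η j) ^ (p (η j)).leadingCoeff * (T j ^ (p j).leadingCoeff)⁻¹ with hU
    set V := T (η i) ^ (p (η i)).leadingCoeff * (T (η j) ^ (p (η j)).leadingCoeff)⁻¹ with hV
    have hUmem : U ∈ mpSubgroup μ := hmemA _ _
    have hVmem : V ∈ mpSubgroup μ := hmemA _ _
    have hVU : T (η i) ^ (p (η i)).leadingCoeff * (T j ^ (p j).leadingCoeff)⁻¹ = V * U := by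
      rw [hU, hV, mul_assoc, ← mul_assoc (T (η j) ^ (p (η j)).leadingCoeff)⁻¹,
        inv_mul_cancel, one_mul]
    have hcomVU : Commute V U :=
      Commute.mul_left
        (Commute.mul_right (base _ _ _ _) ((base _ _ _ _).inv_right))
        (Commute.mul_right ((base _ _ _ _).inv_left) (((base _ _ _ _).inv_left).inv_right))
    have hinvV : fm' h ∘ ⇑(V ^ (γ₁ * γ₂)) =ᵐ[μ] fm' h := by
      rw [mul_comm γ₁ γ₂, pow_mul]
      exact aeInvPow (pow_mem hVmem γ₂).1 (hfm'2 h) γ₁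
    have hinvU : fm' h ∘ ⇑(U ^ (γ₁ * γ₂)) =ᵐ[μ] fm' h := by
      rw [pow_mul]
      exact aeInvPow (pow_mem hUmem γ₁).1 (hfm'1 h) γ₂
    have hbase : fm' h ∘ ⇑((V * U) ^ (γ₁ * γ₂)) =ᵐ[μ] fm' h := by
      rw [hcomVU.mul_pow]
      exact aeInvMul (pow_mem hUmem _).1 hinvV hinvU
    rw [hVU, mul_comm γ (γ₁ * γ₂), pow_mul]
    exact aeInvPow (pow_mem (mul_mem hVmem hUmem) (γ₁ * γ₂)).1 hbase γ
  · simp only [if_neg hj, Function.update_of_ne hj]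
    set R := (T (η j) ^ (p (η j)).leadingCoeff * (T j ^ (p j).leadingCoeff)⁻¹) ^ γ with hR
    have hRmem : R ∈ mpSubgroup μ := pow_mem (hmemA _ _) γ
    have hbase : deltaProd T b h (f j) ∘ ⇑R =ᵐ[μ] deltaProd T b h (f j) := by
      have hεall : ∀ ε : Fin s → Bool,
          (fun x => f j (Tvec T (∑ i', if ε i' then h i' • b i' else 0) (R x)))
            =ᵐ[μ] fun x => f j (Tvec T (∑ i', if ε i' then h i' • b i' else 0) x) := by
        intro ε
        set c : Fin ℓ → ℤ := ∑ i', if ε i' then h i' • b i' else 0 with hc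
        have hcomRT : Commute R (Tvec T c) :=
          (((hcT (η j) c _).mul_left ((hcT j c _).inv_left)).pow_left γ)
        have hswap : ∀ x, Tvec T c (R x) = R (Tvec T c x) := by
          intro x
          have := congrArg (fun g : Equiv.Perm X => g x) hcomRT.eq
          simpa [Equiv.Perm.mul_apply] using this.symm
        have h1 : (f j ∘ ⇑R) ∘ ⇑(Tvec T c) =ᵐ[μ] f j ∘ ⇑(Tvec T c) :=
          aeComp (hTvecMem c).1 (hinv j)
        refine Filter.EventuallyEq.trans ?_ h1
        refine Filter.Eventually.of_forall fun x => ?_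
        simp [Function.comp, hswap x]
      have hall : ∀ᵐ x ∂μ, ∀ ε : Fin s → Bool,
          f j (Tvec T (∑ i', if ε i' then h i' • b i' else 0) (R x))
            = f j (Tvec T (∑ i', if ε i' then h i' • b i' else 0) x) :=
        ae_all_iff.mpr fun ε => hεall ε
      filter_upwards [hall] with x hx
      simp only [Function.comp, deltaProd]
      exact Finset.prod_congr rfl fun ε _ => by rw [hx ε]
    rw [pow_mul, ← hR]
    exact aeInvPow hRmem.1 hbase (γ₁ * γ₂)

end FrantzikinakisKuca
end
end
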